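/- If A belongs to the Schatten class S_p and B belongs to the Schatten class S_q on a Hilbert space H, with 1/r = 1/p + 1/q for 0 < p, q, r < ∞, then the composition AB belongs to the Schatten class S_r. -/

import Mathlib

/-!
The singular values `s_k` are approximation numbers, and they are submultiplicative in the
sense `s_{m+n}(AB) ≤ s_m(A) s_n(B)`: if `F`, `G` approximate `A`, `B` with ranks `≤ m`, `≤ n`,
then `FB + (A - F)G` has rank `≤ m + n` and `AB - (FB + (A - F)G) = (A - F)(B - G)`.
Hence `s_{2k}(AB)` and `s_{2k+1}(AB)` are both bounded by `s_k(A) s_k(B)`, and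
`∑ (s_k(A) s_k(B))^r < ∞` by Young's inequality `(xy)^r ≤ (r/p) x^p + (r/q) y^q`.
-/

open scoped BigOperators

/-- The `k`-th singular value (approximation number) of a bounded operator `T`
on a Hilbert space: the distance from `T` to operators of rank at most `k`.
For compact operators this is the sequence of eigenvalues of `(T*T)^{1/2}`
arranged non-increasingly with multiplicity. -/
noncomputable def singularValue {H : Type*} [NormedAddCommGroup H] [InnerProductSpace ℂ H]
    (T : H →L[ℂ] H) (k : ℕ) : ℝ :=
  sInf ((fun F : H →L[ℂ] H => ‖T - F‖) ''
    {F | FiniteDimensional ℂ (LinearMap.range F.toLinearMap) ∧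
      Module.finrank ℂ (LinearMap.range F.toLinearMap) ≤ k})

/-- Membership in the Schatten class `S_p`: the singular values are `p`-summable. -/
def MemSchatten {H : Type*} [NormedAddCommGroup H] [InnerProductSpace ℂ H]
    (p : ℝ) (T : H →L[ℂ] H) : Prop :=
  Summable fun k => (singularValue T k) ^ p

theorem Module.rank_le_natCast_iff {K V : Type*} [DivisionRing K] [AddCommGroup V] [Module K V]
    {n : ℕ} : Module.rank K V ≤ n ↔ FiniteDimensional K V ∧ Module.finrank K V ≤ n := by
  refine ⟨fun h => ?_, fun ⟨_, h⟩ => FiniteDimensional.finrank_le_iff_rank_le.1 h⟩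
  have : FiniteDimensional K V :=
    Module.rank_lt_aleph0_iff.1 (h.trans_lt Cardinal.natCast_lt_aleph0)
  exact ⟨this, Module.finrank_le_of_rank_le h⟩

section SingularValue

variable {H : Type*} [NormedAddCommGroup H] [InnerProductSpace ℂ H]

theorem singularValue_eq_sInf_rank (T : H →L[ℂ] H) (k : ℕ) :
    singularValue T k =
      sInf ((fun F : H →L[ℂ] H => ‖T - F‖) '' {F | (F : H →ₗ[ℂ] H).rank ≤ k}) := by
  simp only [singularValue, LinearMap.rank, Module.rank_le_natCast_iff]

theorem singularValue_le_norm_sub (T : H →L[ℂ] H) {k : ℕ} {F : H →L[ℂ] H}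
    (hF : (F : H →ₗ[ℂ] H).rank ≤ k) : singularValue T k ≤ ‖T - F‖ := by
  rw [singularValue_eq_sInf_rank]
  exact csInf_le ⟨0, by rintro _ ⟨G, _, rfl⟩; exact norm_nonneg _⟩ ⟨F, hF, rfl⟩

theorem exists_rank_le_norm_sub_lt (T : H →L[ℂ] H) {k : ℕ} {x : ℝ}
    (hx : singularValue T k < x) : ∃ F : H →L[ℂ] H, (F : H →ₗ[ℂ] H).rank ≤ k ∧ ‖T - F‖ < x := by
  rw [singularValue_eq_sInf_rank] at hx
  obtain ⟨_, ⟨F, hF, rfl⟩, hlt⟩ :=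
    exists_lt_of_csInf_lt (Set.Nonempty.image _ ⟨0, by simp⟩) hx
  exact ⟨F, hF, hlt⟩

theorem singularValue_nonneg (T : H →L[ℂ] H) (k : ℕ) : 0 ≤ singularValue T k := by
  rw [singularValue_eq_sInf_rank]
  exact Real.sInf_nonneg (by rintro _ ⟨F, _, rfl⟩; exact norm_nonneg _)

theorem singularValue_antitone (T : H →L[ℂ] H) : Antitone (singularValue T) := by
  intro k l hkl
  refine le_of_forall_gt fun x hx => ?_
  obtain ⟨F, hF, hlt⟩ := exists_rank_le_norm_sub_lt T hx
  exact (singularValue_le_norm_sub T (hF.trans (by exact_mod_cast hkl))).trans_lt hlt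

theorem singularValue_comp_add_le (A B : H →L[ℂ] H) (m n : ℕ) :
    singularValue (A ∘L B) (m + n) ≤ singularValue A m * singularValue B n := by
  set a := singularValue A m
  set b := singularValue B n
  have hle : ∀ ε > 0, singularValue (A ∘L B) (m + n) ≤ (a + ε) * (b + ε) := by
    intro ε hε
    obtain ⟨F, hF, hAF⟩ := exists_rank_le_norm_sub_lt A (lt_add_of_pos_right a hε)
    obtain ⟨G, hG, hBG⟩ := exists_rank_le_norm_sub_lt B (lt_add_of_pos_right b hε)
    have hrank : ((F ∘L B + (A - F) ∘L G : H →L[ℂ] H) : H →ₗ[ℂ] H).rank ≤ ↑(m + n) :=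
      calc _ ≤ (F : H →ₗ[ℂ] H).rank + (G : H →ₗ[ℂ] H).rank := by
            simp only [ContinuousLinearMap.toLinearMap_add]
            exact (LinearMap.rank_add_le _ _).trans
              (add_le_add (LinearMap.rank_comp_le_left _ _) (LinearMap.rank_comp_le_right _ _))
        _ ≤ ↑(m + n) := by push_cast; exact add_le_add hF hG
    calc singularValue (A ∘L B) (m + n) ≤ ‖A ∘L B - (F ∘L B + (A - F) ∘L G)‖ :=
          singularValue_le_norm_sub _ hrank
      _ = ‖(A - F) ∘L (B - G)‖ := by
          congr 1; ext v; simp only [sub_apply, add_apply,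
            ContinuousLinearMap.comp_apply, map_sub]; abel
      _ ≤ ‖A - F‖ * ‖B - G‖ := ContinuousLinearMap.opNorm_comp_le _ _
      _ ≤ (a + ε) * (b + ε) :=
          mul_le_mul hAF.le hBG.le (norm_nonneg _) ((norm_nonneg _).trans hAF.le)
  have hlim : Filter.Tendsto (fun ε : ℝ => (a + ε) * (b + ε)) (nhdsWithin 0 (Set.Ioi 0))
      (nhds (a * b)) := by
    have hcont : Continuous fun ε : ℝ => (a + ε) * (b + ε) := by fun_prop
    exact (hcont.tendsto' 0 _ (by simp)).mono_left nhdsWithin_le_nhds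
  exact ge_of_tendsto hlim (eventually_nhdsWithin_of_forall hle)

end SingularValue

theorem Real.summable_mul_rpow_of_summable_rpow {ι : Type*} {f g : ι → ℝ} {p q r : ℝ}
    (hp : 0 < p) (hq : 0 < q) (hr : 0 < r) (hrel : 1 / r = 1 / p + 1 / q)
    (hf₀ : ∀ i, 0 ≤ f i) (hg₀ : ∀ i, 0 ≤ g i)
    (hf : Summable fun i => f i ^ p) (hg : Summable fun i => g i ^ q) :
    Summable fun i => (f i * g i) ^ r := by
  have hw : r / p + r / q = 1 := by
    rw [div_eq_mul_one_div r p, div_eq_mul_one_div r q, ← mul_add, ← hrel]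
    field_simp
  have hyoung : ∀ i, (f i * g i) ^ r ≤ r / p * f i ^ p + r / q * g i ^ q := by
    intro i
    calc (f i * g i) ^ r = (f i ^ p) ^ (r / p) * (g i ^ q) ^ (r / q) := by
          rw [Real.mul_rpow (hf₀ i) (hg₀ i), ← Real.rpow_mul (hf₀ i), ← Real.rpow_mul (hg₀ i),
            mul_div_cancel₀ _ hp.ne', mul_div_cancel₀ _ hq.ne']
      _ ≤ r / p * f i ^ p + r / q * g i ^ q :=
          Real.geom_mean_le_arith_mean2_weighted (by positivity) (by positivity)
            (Real.rpow_nonneg (hf₀ i) p) (Real.rpow_nonneg (hg₀ i) q) hw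
  exact Summable.of_nonneg_of_le (fun i => Real.rpow_nonneg (mul_nonneg (hf₀ i) (hg₀ i)) r)
    hyoung ((hf.mul_left _).add (hg.mul_left _))

theorem schatten_mul_general {H : Type*} [NormedAddCommGroup H] [InnerProductSpace ℂ H]
    (A B : H →L[ℂ] H) (p q r : ℝ) (hp : 0 < p) (hq : 0 < q) (hr : 0 < r)
    (hrel : 1 / r = 1 / p + 1 / q)
    (hA : MemSchatten p A) (hB : MemSchatten q B) :
    MemSchatten r (A ∘L B) := by
  have hAB : Summable fun k => (singularValue A k * singularValue B k) ^ r :=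
    Real.summable_mul_rpow_of_summable_rpow hp hq hr hrel (singularValue_nonneg A)
      (singularValue_nonneg B) hA hB
  have hs₀ := singularValue_nonneg (A ∘L B)
  have heven (k : ℕ) : singularValue (A ∘L B) (2 * k) ≤ singularValue A k * singularValue B k :=
    two_mul k ▸ singularValue_comp_add_le A B k k
  have hodd (k : ℕ) :
      singularValue (A ∘L B) (2 * k + 1) ≤ singularValue A k * singularValue B k :=
    (singularValue_antitone _ (Nat.le_succ _)).trans (heven k)
  refine Summable.even_add_odd ?_ ?_
  · exact hAB.of_nonneg_of_le (fun k => Real.rpow_nonneg (hs₀ _) r)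
      fun k => Real.rpow_le_rpow (hs₀ _) (heven k) hr.le
  · exact hAB.of_nonneg_of_le (fun k => Real.rpow_nonneg (hs₀ _) r)
      fun k => Real.rpow_le_rpow (hs₀ _) (hodd k) hr.le

/-- Schatten multiplication (Hölder) property: `S_p ∘ S_q ⊆ S_r` when `1/r = 1/p + 1/q`. -/
theorem schatten_mul {H : Type*} [NormedAddCommGroup H] [InnerProductSpace ℂ H]
    [CompleteSpace H] [TopologicalSpace.SeparableSpace H]
    (A B : H →L[ℂ] H) (p q r : ℝ) (hp : 0 < p) (hq : 0 < q) (hr : 0 < r)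
    (hrel : 1 / r = 1 / p + 1 / q)
    (hA : MemSchatten p A) (hB : MemSchatten q B) :
    MemSchatten r (A ∘L B) :=
  schatten_mul_general A B p q r hp hq hr hrel hA hB
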